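/- arXiv:2603.12087 — 2 statements merged into one kernel-verified Lean document; each statement's English description precedes it below -/
import Mathlib

section
/- Performance difference lemma: For any two policies π and π' in a finite discounted MDP, and any initial state distribution ρ ∈ Δ(S), let d^{π'}_ρ(s,a) := (1−γ) Σ_{t≥0} γ^t Pr(s_t = s, a_t = a) for the trajectory generated by s₀ ~ ρ, a_t ~ π'(·|s_t) for all t ≥ 0 and s_{t+1} ~ P(·|s_t,a_t). Then V^{π'}(ρ) − V^{π}(ρ) = (1/(1−γ)) · E_{(s,a)~d^{π'}_ρ}[A^{π}(s,a)], where V^{π}(ρ) := E_{s~ρ}[V^{π}(s)] and A^{π}(s,a) := Q^{π}(s,a) − V^{π}(s) is the advantage function. -/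
open Finset

/-- `p` is a probability distribution on the finite type `X`. -/
def IsDist {X : Type*} [Fintype X] (p : X → ℝ) : Prop :=
  (∀ x, 0 ≤ p x) ∧ ∑ x, p x = 1

/-- `p` is a probability distribution on state–action pairs. -/
def IsDist2 {S A : Type*} [Fintype S] [Fintype A] (p : S → A → ℝ) : Prop :=
  (∀ s a, 0 ≤ p s a) ∧ ∑ s, ∑ a, p s a = 1

/-- `P` is a transition kernel: `P s a` is a distribution over next states. -/
def IsKernel {S A : Type*} [Fintype S] [Fintype A] (P : S → A → S → ℝ) : Prop :=
  ∀ s a, IsDist (P s a)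

/-- `π` is a (stationary Markov) policy: `π s` is a distribution over actions. -/
def IsPolicy {S A : Type*} [Fintype S] [Fintype A] (π : S → A → ℝ) : Prop :=
  ∀ s, IsDist (π s)

/-- One-step evolution of a state–action distribution under kernel `P` and policy `π`:
the next state is drawn from `P`, the next action from `π`. -/
noncomputable def step {S A : Type*} [Fintype S] [Fintype A]
    (P : S → A → S → ℝ) (π : S → A → ℝ) (d : S → A → ℝ) : S → A → ℝ :=
  fun s' a' => (∑ s, ∑ a, d s a * P s a s') * π s' a'

/-- Distribution of `(s_t, a_t)` along the trajectory started at the state–action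
distribution `μ` and evolving under `P` and `π`. -/
noncomputable def traj {S A : Type*} [Fintype S] [Fintype A]
    (P : S → A → S → ℝ) (π : S → A → ℝ) (μ : S → A → ℝ) (t : ℕ) : S → A → ℝ :=
  (step P π)^[t] μ

/-- Discounted state–action visitation distribution
`d^π(s,a) = (1-γ) ∑_t γ^t Pr(s_t = s, a_t = a; π, μ)`. -/
noncomputable def dvisit {S A : Type*} [Fintype S] [Fintype A]
    (P : S → A → S → ℝ) (π : S → A → ℝ) (γ : ℝ) (μ : S → A → ℝ) (s : S) (a : A) : ℝ :=
  (1 - γ) * ∑' t : ℕ, γ ^ t * traj P π μ t s a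

/-- Point mass at the state–action pair `(s, a)`. -/
def dirac {S A : Type*} [DecidableEq S] [DecidableEq A] (s : S) (a : A) : S → A → ℝ :=
  fun s' a' => if s' = s ∧ a' = a then 1 else 0

/-- Action-value function `Q^π(s,a) = E[∑_t γ^t r(s_t,a_t) | s₀ = s, a₀ = a]`,
with later actions drawn from `π` and transitions from `P`. -/
noncomputable def Qpi {S A : Type*} [Fintype S] [Fintype A] [DecidableEq S] [DecidableEq A]
    (P : S → A → S → ℝ) (r : S → A → ℝ) (π : S → A → ℝ) (γ : ℝ) (s : S) (a : A) : ℝ :=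
  ∑' t : ℕ, γ ^ t * ∑ s', ∑ a', traj P π (dirac s a) t s' a' * r s' a'

/-- Value function `V^π(s) = E_{a ~ π(·|s)}[Q^π(s,a)]`. -/
noncomputable def Vpi {S A : Type*} [Fintype S] [Fintype A] [DecidableEq S] [DecidableEq A]
    (P : S → A → S → ℝ) (r : S → A → ℝ) (π : S → A → ℝ) (γ : ℝ) (s : S) : ℝ :=
  ∑ a, π s a * Qpi P r π γ s a

/-- Bellman error of a function `Q` with respect to the policy `π`
(the TD error `ε_td` when `Q` is a target critic, and the cross-domain Bellman
error `ε_cd` when `Q` is a composed source critic `g`). -/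
noncomputable def bellErr {S A : Type*} [Fintype S] [Fintype A]
    (P : S → A → S → ℝ) (r : S → A → ℝ) (γ : ℝ) (π : S → A → ℝ)
    (Q : S → A → ℝ) (s : S) (a : A) : ℝ :=
  |Q s a - r s a - γ * ∑ s', P s a s' * ∑ a', π s' a' * Q s' a'|

/-- NPG-style exponentiated-update policy sequence: `npg ν η 0` is the uniform policy,
and `npg ν η (t+1)` is the exponentiated update of `npg ν η t` along `ν t`. -/
noncomputable def npg {S A : Type*} [Fintype S] [Fintype A]
    (ν : ℕ → S → A → ℝ) (η : ℝ) : ℕ → S → A → ℝ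
  | 0 => fun _ _ => (Fintype.card A : ℝ)⁻¹
  | t + 1 => fun s a =>
      npg ν η t s a * Real.exp (η * ν t s a) /
        ∑ a', npg ν η t s a' * Real.exp (η * ν t s a')

/-!
Write `D_t` for the law of `(s_t, a_t)` under `π'` and `V̂(s, a) := V^π(s)`. Pushing `D_t`
one step forward is dual to applying the transition operator `f ↦ E[f(s', a')]`, so the
Bellman equation `Q^π = r + γ P V^π` gives
`E_{D_t}[A^π] = E_{D_t}[r] + γ E_{D_{t+1}}[V̂] - E_{D_t}[V̂]`.
Summing with weights `γ^t`, the reward terms add up to `E_{D_0}[Q^{π'}] = V^{π'}(ρ)` and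
the value terms telescope to `-V^π(ρ)`. All series converge because the transition
operator is an average, hence preserves bounds.
-/

section TransitionOperator

variable {S A : Type*} [Fintype S] [Fintype A]

def expectation (d f : S → A → ℝ) : ℝ :=
  ∑ s, ∑ a, d s a * f s a

def stepAdjoint (P : S → A → S → ℝ) (π : S → A → ℝ) (f : S → A → ℝ) : S → A → ℝ :=
  fun s a => ∑ s', P s a s' * ∑ a', π s' a' * f s' a'

theorem expectation_step (P : S → A → S → ℝ) (π : S → A → ℝ) (d f : S → A → ℝ) :
    expectation (step P π d) f = expectation d (stepAdjoint P π f) := by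
  simp only [expectation, step, stepAdjoint, Finset.sum_mul, Finset.mul_sum, mul_assoc]
  calc _ = ∑ s', ∑ s, ∑ a', ∑ a, d s a * (P s a s' * (π s' a' * f s' a')) :=
        Finset.sum_congr rfl fun _ _ => Finset.sum_comm
    _ = _ := by
      rw [Finset.sum_comm]
      exact Finset.sum_congr rfl fun _ _ =>
        (Finset.sum_congr rfl fun _ _ => Finset.sum_comm).trans Finset.sum_comm

theorem traj_succ (P : S → A → S → ℝ) (π : S → A → ℝ) (μ : S → A → ℝ) (t : ℕ) :
    traj P π μ (t + 1) = step P π (traj P π μ t) :=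
  Function.iterate_succ_apply' _ _ _

theorem expectation_traj (P : S → A → S → ℝ) (π : S → A → ℝ) (μ : S → A → ℝ) (t : ℕ)
    (f : S → A → ℝ) :
    expectation (traj P π μ t) f = expectation μ ((stepAdjoint P π)^[t] f) := by
  induction t generalizing f with
  | zero => rfl
  | succ t ih =>
    rw [traj_succ, expectation_step, ih, ← Function.iterate_succ_apply]

theorem stepAdjoint_stateFun {P : S → A → S → ℝ} {π : S → A → ℝ} (hπ : IsPolicy π)
    (v : S → ℝ) (s : S) (a : A) :
    stepAdjoint P π (fun s _ => v s) s a = ∑ s', P s a s' * v s' := by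
  simp only [stepAdjoint, ← Finset.sum_mul, (hπ _).2, one_mul]

theorem expectation_dirac_left [DecidableEq S] [DecidableEq A] (f : S → A → ℝ) (s : S)
    (a : A) : expectation (dirac s a) f = f s a := by
  simp [expectation, dirac, ite_and]

theorem expectation_dirac_right [DecidableEq S] [DecidableEq A] (d : S → A → ℝ) (s : S)
    (a : A) : expectation d (dirac s a) = d s a := by
  simp [expectation, dirac, ite_and]

end TransitionOperator

section Summability

variable {S A : Type*} [Fintype S] [Fintype A]

theorem IsDist.abs_sum_mul_le {X : Type*} [Fintype X] {p : X → ℝ} (hp : IsDist p)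
    {g : X → ℝ} {C : ℝ} (hg : ∀ x, |g x| ≤ C) : |∑ x, p x * g x| ≤ C :=
  calc |∑ x, p x * g x| ≤ ∑ x, p x * |g x| := by
        refine (Finset.abs_sum_le_sum_abs _ _).trans_eq (Finset.sum_congr rfl fun x _ => ?_)
        rw [abs_mul, abs_of_nonneg (hp.1 x)]
    _ ≤ ∑ x, p x * C := Finset.sum_le_sum fun x _ => mul_le_mul_of_nonneg_left (hg x) (hp.1 x)
    _ = C := by rw [← Finset.sum_mul, hp.2, one_mul]

theorem abs_iterate_stepAdjoint_le {P : S → A → S → ℝ} {π : S → A → ℝ} (hP : IsKernel P)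
    (hπ : IsPolicy π) {f : S → A → ℝ} {C : ℝ} (hf : ∀ s a, |f s a| ≤ C) (t : ℕ) (s : S)
    (a : A) : |(stepAdjoint P π)^[t] f s a| ≤ C := by
  induction t generalizing s a with
  | zero => exact hf s a
  | succ t ih =>
    rw [Function.iterate_succ_apply']
    exact (hP s a).abs_sum_mul_le fun s' => (hπ s').abs_sum_mul_le fun a' => ih s' a'

theorem summable_discounted_iterate_stepAdjoint {P : S → A → S → ℝ} {π : S → A → ℝ}
    (hP : IsKernel P) (hπ : IsPolicy π) {γ : ℝ} (hγ0 : 0 ≤ γ) (hγ1 : γ < 1)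
    {f : S → A → ℝ} {C : ℝ} (hf : ∀ s a, |f s a| ≤ C) (s : S) (a : A) :
    Summable fun t => γ ^ t * (stepAdjoint P π)^[t] f s a := by
  refine ((summable_geometric_of_lt_one hγ0 hγ1).mul_right C).of_norm_bounded fun t => ?_
  rw [Real.norm_eq_abs, abs_mul, abs_of_nonneg (pow_nonneg hγ0 t)]
  exact mul_le_mul_of_nonneg_left (abs_iterate_stepAdjoint_le hP hπ hf t s a)
    (pow_nonneg hγ0 t)

theorem hasSum_stepAdjoint (P : S → A → S → ℝ) (π : S → A → ℝ) {c : ℕ → ℝ}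
    {g : ℕ → S → A → ℝ} {G : S → A → ℝ} (hg : ∀ s a, HasSum (fun t => c t * g t s a) (G s a))
    (s : S) (a : A) :
    HasSum (fun t => c t * stepAdjoint P π (g t) s a) (stepAdjoint P π G s a) := by
  simp only [stepAdjoint, Finset.mul_sum]
  refine hasSum_sum fun s' _ => hasSum_sum fun a' _ => ?_
  simpa only [mul_left_comm (c _)] using ((hg s' a').mul_left (π s' a')).mul_left (P s a s')

theorem hasSum_expectation_right (d : S → A → ℝ) {c : ℕ → ℝ} {g : ℕ → S → A → ℝ}
    {G : S → A → ℝ} (hg : ∀ s a, HasSum (fun t => c t * g t s a) (G s a)) :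
    HasSum (fun t => c t * expectation d (g t)) (expectation d G) := by
  simp only [expectation, Finset.mul_sum]
  refine hasSum_sum fun s _ => hasSum_sum fun a _ => ?_
  simpa only [mul_left_comm (c _)] using (hg s a).mul_left (d s a)

theorem hasSum_expectation_left (f : S → A → ℝ) {c : ℕ → ℝ} {d : ℕ → S → A → ℝ}
    {D : S → A → ℝ} (hd : ∀ s a, HasSum (fun t => c t * d t s a) (D s a)) :
    HasSum (fun t => c t * expectation (d t) f) (expectation D f) := by
  simp only [expectation, Finset.mul_sum]
  refine hasSum_sum fun s _ => hasSum_sum fun a _ => ?_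
  simpa only [mul_assoc] using (hd s a).mul_right (f s a)

theorem summable_discounted_traj {P : S → A → S → ℝ} {π : S → A → ℝ} (hP : IsKernel P)
    (hπ : IsPolicy π) {γ : ℝ} (hγ0 : 0 ≤ γ) (hγ1 : γ < 1) (μ : S → A → ℝ) (s : S) (a : A) :
    Summable fun t => γ ^ t * traj P π μ t s a := by
  classical
  have hdirac : ∀ s' a', |dirac s a s' a'| ≤ 1 := fun s' a' => by
    unfold dirac; split_ifs <;> simp
  simp_rw [← expectation_dirac_right (traj P π μ _) s a, expectation_traj]
  exact (hasSum_expectation_right μ fun s' a' =>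
    (summable_discounted_iterate_stepAdjoint hP hπ hγ0 hγ1 hdirac s' a').hasSum).summable

end Summability

section Bellman

variable {S A : Type*} [Fintype S] [Fintype A] [DecidableEq S] [DecidableEq A]
  {P : S → A → S → ℝ} {r : S → A → ℝ} {π : S → A → ℝ} {γ : ℝ}

theorem Qpi_eq_tsum (s : S) (a : A) :
    Qpi P r π γ s a = ∑' t, γ ^ t * (stepAdjoint P π)^[t] r s a :=
  tsum_congr fun t => by
    rw [← expectation_dirac_left ((stepAdjoint P π)^[t] r) s a, ← expectation_traj]
    rfl

theorem hasSum_Qpi (hP : IsKernel P) (hπ : IsPolicy π) (hγ0 : 0 ≤ γ) (hγ1 : γ < 1) {C : ℝ}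
    (hr : ∀ s a, |r s a| ≤ C) (s : S) (a : A) :
    HasSum (fun t => γ ^ t * (stepAdjoint P π)^[t] r s a) (Qpi P r π γ s a) := by
  rw [Qpi_eq_tsum]
  exact (summable_discounted_iterate_stepAdjoint hP hπ hγ0 hγ1 hr s a).hasSum

theorem Qpi_bellman (hP : IsKernel P) (hπ : IsPolicy π) (hγ0 : 0 ≤ γ) (hγ1 : γ < 1) {C : ℝ}
    (hr : ∀ s a, |r s a| ≤ C) (s : S) (a : A) :
    Qpi P r π γ s a = r s a + γ * ∑ s', P s a s' * Vpi P r π γ s' := by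
  have hQ := hasSum_Qpi hP hπ hγ0 hγ1 hr
  have hshift : HasSum (fun t => γ ^ (t + 1) * (stepAdjoint P π)^[t + 1] r s a)
      (Qpi P r π γ s a - r s a) := by
    simpa using (hasSum_nat_add_iff' 1).2 (hQ s a)
  have hnext : HasSum (fun t => γ ^ (t + 1) * (stepAdjoint P π)^[t + 1] r s a)
      (γ * stepAdjoint P π (Qpi P r π γ) s a) := by
    simpa only [Function.iterate_succ_apply', pow_succ', mul_assoc]
      using (hasSum_stepAdjoint P π hQ s a).mul_left γ
  have h := hshift.unique hnext
  rw [stepAdjoint] at h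
  rw [← sub_eq_iff_eq_add', h]
  rfl

theorem hasSum_discounted_expectation_reward (hP : IsKernel P) (hπ : IsPolicy π)
    (hγ0 : 0 ≤ γ) (hγ1 : γ < 1) {C : ℝ} (hr : ∀ s a, |r s a| ≤ C) (μ : S → A → ℝ) :
    HasSum (fun t => γ ^ t * expectation (traj P π μ t) r) (expectation μ (Qpi P r π γ)) := by
  simp_rw [expectation_traj]
  exact hasSum_expectation_right μ (hasSum_Qpi hP hπ hγ0 hγ1 hr)

theorem expectation_traj_advantage (hP : IsKernel P) (hπ : IsPolicy π) (hγ0 : 0 ≤ γ)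
    (hγ1 : γ < 1) {C : ℝ} (hr : ∀ s a, |r s a| ≤ C) {π' : S → A → ℝ} (hπ' : IsPolicy π')
    (μ : S → A → ℝ) (t : ℕ) :
    expectation (traj P π' μ t) (fun s a => Qpi P r π γ s a - Vpi P r π γ s) =
      expectation (traj P π' μ t) r
        + γ * expectation (traj P π' μ (t + 1)) (fun s _ => Vpi P r π γ s)
        - expectation (traj P π' μ t) (fun s _ => Vpi P r π γ s) := by
  rw [traj_succ, expectation_step]
  simp only [expectation, stepAdjoint_stateFun hπ', Qpi_bellman hP hπ hγ0 hγ1 hr,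
    mul_sub, mul_add, Finset.sum_sub_distrib, Finset.sum_add_distrib, Finset.mul_sum,
    mul_left_comm γ]

end Bellman

theorem hasSum_discounted_telescope {γ X : ℝ} {R W B : ℕ → ℝ}
    (hR : HasSum (fun t => γ ^ t * R t) X) (hW : Summable fun t => γ ^ t * W t)
    (hB : ∀ t, B t = R t + γ * W (t + 1) - W t) :
    HasSum (fun t => γ ^ t * B t) (X - W 0) := by
  obtain ⟨Y, hY⟩ := hW
  have hshift : HasSum (fun t => γ ^ (t + 1) * W (t + 1)) (Y - W 0) := by
    simpa using (hasSum_nat_add_iff' 1).2 hY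
  have hsummand : (fun t => γ ^ t * B t)
      = fun t => γ ^ t * R t + γ ^ (t + 1) * W (t + 1) - γ ^ t * W t :=
    funext fun t => by rw [hB, pow_succ]; ring
  rw [hsummand, show X - W 0 = X + (Y - W 0) - Y by ring]
  exact (hR.add hshift).sub hY

theorem performance_difference_lemma_general
    {S A : Type*} [Fintype S] [Fintype A]
    [DecidableEq S] [DecidableEq A]
    (P : S → A → S → ℝ) (r : S → A → ℝ) (γ : ℝ)
    (hP : IsKernel P) (hr : ∀ s a, 0 ≤ r s a ∧ r s a ≤ 1)
    (hγ0 : 0 ≤ γ) (hγ1 : γ < 1)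
    (π π' : S → A → ℝ) (hπ : IsPolicy π) (hπ' : IsPolicy π')
    (ρ : S → ℝ) :
    (∑ s, ρ s * Vpi P r π' γ s) - ∑ s, ρ s * Vpi P r π γ s =
      (1 / (1 - γ)) *
        ∑ s, ∑ a, dvisit P π' γ (fun s a => ρ s * π' s a) s a *
          (Qpi P r π γ s a - Vpi P r π γ s) := by
  have hr' : ∀ s a, |r s a| ≤ 1 := fun s a => abs_le.2 ⟨by linarith [(hr s a).1], (hr s a).2⟩
  set μ : S → A → ℝ := fun s a => ρ s * π' s a
  have hvisit (f : S → A → ℝ) := hasSum_expectation_left f fun s a =>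
    (summable_discounted_traj hP hπ' hγ0 hγ1 μ s a).hasSum
  have htel := hasSum_discounted_telescope
    (hasSum_discounted_expectation_reward hP hπ' hγ0 hγ1 hr' μ)
    (hvisit fun s _ => Vpi P r π γ s).summable
    (expectation_traj_advantage hP hπ hγ0 hγ1 hr' hπ' μ)
  have hμQ : expectation μ (Qpi P r π' γ) = ∑ s, ρ s * Vpi P r π' γ s := by
    simp only [expectation, μ, Vpi, Finset.mul_sum, mul_assoc]
  have hμV : expectation μ (fun s _ => Vpi P r π γ s) = ∑ s, ρ s * Vpi P r π γ s := by
    simp only [expectation, μ, ← Finset.sum_mul, ← Finset.mul_sum, (hπ' _).2, mul_one]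
  have hvisit_eq : ∑ s, ∑ a, dvisit P π' γ μ s a * (Qpi P r π γ s a - Vpi P r π γ s)
      = (1 - γ) * expectation (fun s a => ∑' t, γ ^ t * traj P π' μ t s a)
          fun s a => Qpi P r π γ s a - Vpi P r π γ s := by
    simp only [dvisit, expectation, Finset.mul_sum, mul_assoc]
  rw [hvisit_eq, (hvisit _).unique htel, traj, Function.iterate_zero_apply, hμQ, hμV]
  field_simp [(sub_pos.2 hγ1).ne']

/-- **Performance difference lemma.** For any two policies `π` and `π'` and any initial
state distribution `ρ`,
`V^{π'}(ρ) − V^{π}(ρ) = (1/(1−γ)) E_{(s,a) ~ d^{π'}_ρ}[A^{π}(s,a)]`,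
where `d^{π'}_ρ` is the visitation distribution of the trajectory started with
`s₀ ~ ρ`, `a_t ~ π'(·|s_t)` and `A^π = Q^π − V^π`. -/
theorem performance_difference_lemma
    {S A : Type*} [Fintype S] [Fintype A] [Nonempty S] [Nonempty A]
    [DecidableEq S] [DecidableEq A]
    (P : S → A → S → ℝ) (r : S → A → ℝ) (γ : ℝ) (μ : S → A → ℝ)
    (hP : IsKernel P) (hr : ∀ s a, 0 ≤ r s a ∧ r s a ≤ 1)
    (hγ0 : 0 ≤ γ) (hγ1 : γ < 1) (hμ : IsDist2 μ)
    (π π' : S → A → ℝ) (hπ : IsPolicy π) (hπ' : IsPolicy π')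
    (ρ : S → ℝ) (hρ : IsDist ρ) :
    (∑ s, ρ s * Vpi P r π' γ s) - ∑ s, ρ s * Vpi P r π γ s =
      (1 / (1 - γ)) *
        ∑ s, ∑ a, dvisit P π' γ (fun s a => ρ s * π' s a) s a *
          (Qpi P r π γ s a - Vpi P r π γ s) :=
  performance_difference_lemma_general P r γ hP hr hγ0 hγ1 π π' hπ hπ' ρ
end

section
/- Regret bound for the NPG-style exponentiated update (Lemma on mirror-descent regret): Let S and A be finite nonempty sets, γ ∈ [0,1), T ≥ 1 an integer, and η = (1−γ)·√(1/T). Let ν^{(1)}, …, ν^{(T)} : S × A → ℝ satisfy ‖ν^{(t)}‖_∞ ≤ 1/(1−γ) for all t. Define policies π^{(t)} : S → Δ(A) by π^{(1)}(a|s) = 1/|A| and π^{(t+1)}(a|s) = π^{(t)}(a|s) exp(η ν^{(t)}(s,a)) / Σ_{a'∈A} π^{(t)}(a'|s) exp(η ν^{(t)}(s,a')). Define the centered functions ν̄^{(t)}(s,a) := ν^{(t)}(s,a) − E_{a'~π^{(t)}(·|s)}[ν^{(t)}(s,a')]. Then for any probability distribution ρ on S × A (in the paper, ρ = d^{π*}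 for an optimal policy π*), Σ_{t=1}^T E_{(s,a)~ρ}[ν̄^{(t)}(s,a)] ≤ √T · (log|A| + 1) / (1−γ). -/
open Finset

/-!
For a fixed state `s`, the iterate `npg ν η t s` is the softmax of `η` times the cumulative
scores `∑_{u<t} ν u s ·`. The log-partition function `Φ_t = log ∑_a exp (η ∑_{u<t} ν u s a)`
starts at `log |A|`, dominates `η` times the cumulative score of every single action, and by
`exp x ≤ 1 + x + x²` (for `|x| ≤ 1`) and `log y ≤ y - 1` grows in step `t` by at most
`η E_{π_t}[ν_t] + c²`, where `c` bounds `|η ν_t|`. Telescoping bounds `η` times the regret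
against any fixed `(s, a)` by `log |A| + T c²`, which is `log |A| + 1` for the chosen `η`;
averaging over `ρ` finishes the proof.
-/

open Real

theorem exp_le_one_add_add_sq {x : ℝ} (hx : |x| ≤ 1) : exp x ≤ 1 + x + x ^ 2 := by
  linarith [le_abs_self (exp x - 1 - x), abs_exp_sub_one_sub_id_le hx]

theorem IsDist.log_sum_mul_exp_le {A : Type*} [Fintype A] {p x : A → ℝ} {c : ℝ}
    (hp : IsDist p) (hx : ∀ a, |x a| ≤ c) (hc : c ≤ 1) :
    log (∑ a, p a * exp (x a)) ≤ ∑ a, p a * x a + c ^ 2 := by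
  obtain ⟨b, -, hb⟩ := Finset.exists_ne_zero_of_sum_ne_zero (hp.2.symm ▸ one_ne_zero)
  have hpos : 0 < ∑ a, p a * exp (x a) :=
    Finset.sum_pos' (fun a _ => mul_nonneg (hp.1 a) (exp_pos _).le)
      ⟨b, Finset.mem_univ b, mul_pos ((hp.1 b).lt_of_ne' hb) (exp_pos _)⟩
  have hexp : ∀ a, exp (x a) ≤ 1 + x a + c ^ 2 := fun a => by
    have hsq : x a ^ 2 ≤ c ^ 2 := sq_le_sq' (abs_le.1 (hx a)).1 (abs_le.1 (hx a)).2
    linarith [exp_le_one_add_add_sq ((hx a).trans hc)]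
  calc log (∑ a, p a * exp (x a))
      ≤ ∑ a, p a * exp (x a) - 1 := log_le_sub_one_of_pos hpos
    _ ≤ ∑ a, p a * (1 + x a + c ^ 2) - 1 := by
      gcongr with a
      exacts [hp.1 a, hexp a]
    _ = ∑ a, p a * x a + c ^ 2 := by
      simp only [mul_add, mul_one, Finset.sum_add_distrib, ← Finset.sum_mul, hp.2]
      ring

theorem IsDist2.sum_sum_mul_le {S A : Type*} [Fintype S] [Fintype A] {ρ f : S → A → ℝ}
    {C : ℝ} (hρ : IsDist2 ρ) (hf : ∀ s a, f s a ≤ C) :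
    ∑ s, ∑ a, ρ s a * f s a ≤ C :=
  calc ∑ s, ∑ a, ρ s a * f s a ≤ ∑ s, ∑ a, ρ s a * C := by
        gcongr with s _ a
        exacts [hρ.1 s a, hf s a]
    _ = C := by simp only [← Finset.sum_mul, hρ.2, one_mul]

theorem IsDist2.sum_sum_sum_mul_le {ι S A : Type*} [Fintype S] [Fintype A] {I : Finset ι}
    {ρ : S → A → ℝ} {g : ι → S → A → ℝ} {C : ℝ} (hρ : IsDist2 ρ)
    (hg : ∀ s a, ∑ i ∈ I, g i s a ≤ C) :
    ∑ i ∈ I, ∑ s, ∑ a, ρ s a * g i s a ≤ C := by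
  rw [Finset.sum_comm]
  simp only [Finset.sum_comm (s := I), ← Finset.mul_sum]
  exact hρ.sum_sum_mul_le hg

section npg

variable {S A : Type*} (ν : ℕ → S → A → ℝ) (η : ℝ)

noncomputable def npgWeight (t : ℕ) (s : S) (a : A) : ℝ :=
  exp (η * ∑ u ∈ Finset.range t, ν u s a)

theorem npgWeight_pos (t : ℕ) (s : S) (a : A) : 0 < npgWeight ν η t s a :=
  exp_pos _

theorem npgWeight_succ (t : ℕ) (s : S) (a : A) :
    npgWeight ν η (t + 1) s a = npgWeight ν η t s a * exp (η * ν t s a) := by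
  rw [npgWeight, npgWeight, Finset.sum_range_succ, mul_add, exp_add]

theorem sum_npgWeight_pos [Fintype A] [Nonempty A] (t : ℕ) (s : S) :
    0 < ∑ a, npgWeight ν η t s a :=
  Finset.sum_pos (fun a _ => npgWeight_pos ν η t s a) Finset.univ_nonempty

theorem mul_sum_le_log_sum_npgWeight [Fintype A] (T : ℕ) (s : S) (a : A) :
    η * ∑ t ∈ Finset.range T, ν t s a ≤ log (∑ a', npgWeight ν η T s a') := by
  rw [← log_exp (η * _)]
  exact log_le_log (npgWeight_pos ν η T s a)
    (Finset.single_le_sum (fun a' _ => (npgWeight_pos ν η T s a').le) (Finset.mem_univ a))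

variable [Fintype S] [Fintype A] [Nonempty A]

theorem npg_eq_npgWeight_div (t : ℕ) (s : S) (a : A) :
    npg ν η t s a = npgWeight ν η t s a / ∑ a', npgWeight ν η t s a' := by
  induction t generalizing a with
  | zero => simp [npg, npgWeight, Finset.card_univ]
  | succ t ih =>
    have hZ := (sum_npgWeight_pos ν η t s).ne'
    have hnum : ∀ a', npg ν η t s a' * exp (η * ν t s a')
        = npgWeight ν η (t + 1) s a' / ∑ b, npgWeight ν η t s b := fun a' => by
      rw [ih, npgWeight_succ, div_mul_eq_mul_div]
    simp only [npg, hnum, ← Finset.sum_div]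
    rw [div_div_div_cancel_right₀ hZ]

theorem npg_isPolicy (t : ℕ) : IsPolicy (npg ν η t : S → A → ℝ) := fun s => by
  refine ⟨fun a => ?_, ?_⟩
  · rw [npg_eq_npgWeight_div]
    exact div_nonneg (npgWeight_pos ν η t s a).le (sum_npgWeight_pos ν η t s).le
  · simp only [npg_eq_npgWeight_div, ← Finset.sum_div]
    exact div_self (sum_npgWeight_pos ν η t s).ne'

theorem sum_npgWeight_succ (t : ℕ) (s : S) :
    ∑ a, npgWeight ν η (t + 1) s a
      = (∑ a, npgWeight ν η t s a) * ∑ a, npg ν η t s a * exp (η * ν t s a) := by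
  simp only [npgWeight_succ, npg_eq_npgWeight_div, Finset.mul_sum]
  refine Finset.sum_congr rfl fun a _ => ?_
  field_simp [(sum_npgWeight_pos ν η t s).ne']

theorem log_sum_npgWeight_succ_le {c : ℝ} {t : ℕ} {s : S} (hν : ∀ a, |η * ν t s a| ≤ c)
    (hc : c ≤ 1) :
    log (∑ a, npgWeight ν η (t + 1) s a)
      ≤ log (∑ a, npgWeight ν η t s a) + η * ∑ a, npg ν η t s a * ν t s a + c ^ 2 := by
  have hZ := sum_npgWeight_pos ν η t s
  have hZ' := sum_npgWeight_pos ν η (t + 1) s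
  rw [sum_npgWeight_succ] at hZ' ⊢
  rw [log_mul hZ.ne' ((pos_iff_pos_of_mul_pos hZ').1 hZ).ne', Finset.mul_sum]
  have hstep := (npg_isPolicy ν η t s).log_sum_mul_exp_le hν hc
  simp only [mul_left_comm η] at hstep ⊢
  linarith

theorem log_sum_npgWeight_le {c : ℝ} {T : ℕ} {s : S} (hν : ∀ t < T, ∀ a, |η * ν t s a| ≤ c)
    (hc : c ≤ 1) :
    log (∑ a, npgWeight ν η T s a) ≤ log (Fintype.card A)
      + η * ∑ t ∈ Finset.range T, ∑ a, npg ν η t s a * ν t s a + T * c ^ 2 := by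
  induction T with
  | zero => simp [npgWeight, Finset.card_univ]
  | succ T ih =>
    have hstep := log_sum_npgWeight_succ_le ν η (hν T T.lt_succ_self) hc
    have hprev := ih fun t ht => hν t (ht.trans T.lt_succ_self)
    rw [Finset.sum_range_succ, mul_add]
    push_cast
    linarith

theorem npg_regret_le {c : ℝ} {T : ℕ} {s : S} (hν : ∀ t < T, ∀ a, |η * ν t s a| ≤ c)
    (hc : c ≤ 1) (a : A) :
    η * ∑ t ∈ Finset.range T, (ν t s a - ∑ a', npg ν η t s a' * ν t s a')
      ≤ log (Fintype.card A) + T * c ^ 2 := by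
  rw [Finset.sum_sub_distrib, mul_sub]
  linarith [mul_sum_le_log_sum_npgWeight ν η T s a, log_sum_npgWeight_le ν η hν hc]

end npg

theorem npg_regret_bound_general
    {S A : Type*} [Fintype S] [Fintype A] [Nonempty A]
    (γ : ℝ) (hγ1 : γ < 1)
    (T : ℕ) (hT : 1 ≤ T)
    (η : ℝ) (hη : η = (1 - γ) * Real.sqrt (1 / (T : ℝ)))
    (ν : ℕ → S → A → ℝ) (hν : ∀ t < T, ∀ s a, |ν t s a| ≤ 1 / (1 - γ))
    (ρ : S → A → ℝ) (hρ : IsDist2 ρ) :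
    ∑ t ∈ Finset.range T, ∑ s, ∑ a, ρ s a *
        (ν t s a - ∑ a', npg ν η t s a' * ν t s a')
      ≤ Real.sqrt (T : ℝ) * (Real.log (Fintype.card A) + 1) / (1 - γ) := by
  have h1γ : 0 < 1 - γ := sub_pos.2 hγ1
  have hT0 : (0 : ℝ) < T := by exact_mod_cast hT
  set c := √(1 / (T : ℝ)) with hc
  have hc1 : c ≤ 1 := sqrt_le_one.2 (div_le_one_of_le₀ (by exact_mod_cast hT) hT0.le)
  have hTc : (T : ℝ) * c ^ 2 = 1 := by
    rw [sq_sqrt (by positivity)]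
    field_simp
  have hηpos : 0 < η := hη ▸ mul_pos h1γ (sqrt_pos.2 (by positivity))
  have hην : ∀ t < T, ∀ s a, |η * ν t s a| ≤ c := fun t ht s a => by
    calc |η * ν t s a| = c * ((1 - γ) * |ν t s a|) := by
          rw [abs_mul, abs_of_pos hηpos, hη]
          ring
      _ ≤ c * ((1 - γ) * (1 / (1 - γ))) := by gcongr; exact hν t ht s a
      _ = c := by field_simp
  refine hρ.sum_sum_sum_mul_le fun s a => ?_
  have h := npg_regret_le ν η (fun t ht => hην t ht s) hc1 a
  rw [hTc] at h
  calc _ ≤ (log (Fintype.card A) + 1) / η := (le_div_iff₀' hηpos).2 h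
    _ = _ := by
      rw [hη, hc, one_div, sqrt_inv]
      field_simp

/-- **Regret bound for the NPG-style exponentiated update.** With `η = (1−γ)√(1/T)`,
`‖ν^{(t)}‖_∞ ≤ 1/(1−γ)` for all `t < T`, policies `π^{(t)} = npg ν η t` (uniform at `t = 0`
and exponentiated updates afterwards), and centered functions
`ν̄^{(t)}(s,a) = ν^{(t)}(s,a) − E_{a' ~ π^{(t)}(·|s)}[ν^{(t)}(s,a')]`, for any distribution
`ρ` on `S × A` we have `∑_{t<T} E_ρ[ν̄^{(t)}] ≤ √T (log|A| + 1)/(1−γ)`. -/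
theorem npg_regret_bound
    {S A : Type*} [Fintype S] [Fintype A] [Nonempty S] [Nonempty A]
    (γ : ℝ) (hγ0 : 0 ≤ γ) (hγ1 : γ < 1)
    (T : ℕ) (hT : 1 ≤ T)
    (η : ℝ) (hη : η = (1 - γ) * Real.sqrt (1 / (T : ℝ)))
    (ν : ℕ → S → A → ℝ) (hν : ∀ t < T, ∀ s a, |ν t s a| ≤ 1 / (1 - γ))
    (ρ : S → A → ℝ) (hρ : IsDist2 ρ) :
    ∑ t ∈ Finset.range T, ∑ s, ∑ a, ρ s a *
        (ν t s a - ∑ a', npg ν η t s a' * ν t s a')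
      ≤ Real.sqrt (T : ℝ) * (Real.log (Fintype.card A) + 1) / (1 - γ) :=
  npg_regret_bound_general γ hγ1 T hT η hη ν hν ρ hρ
end
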